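/- arXiv:1305.1454 — 3 statements merged into one kernel-verified Lean document; each statement's English description precedes it below -/
import Mathlib

section
/- (Carré inequality) Let A be an n×n max-plus matrix with Tr(A) = tr A ⊕ tr A² ⊕ ... ⊕ tr Aⁿ ≤ 0. Then for every integer k ≥ 0, the matrix power A^k satisfies A^k ≤ A* entrywise, where A* = I ⊕ A ⊕ A² ⊕ ... ⊕ A^{n-1}. -/
noncomputable section

/-- Max-plus carrier: ℝ ∪ {-∞}. Addition ⊕ is `max`, multiplication ⊗ is `+`
(with ⊥ = -∞ absorbing), zero is ⊥ and unit is `(0 : ℝ)`. -/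
abbrev MP := WithBot ℝ

/-- Multiplicative conjugate: negate a finite value, send -∞ to -∞. -/
def mpInv (a : MP) : MP := a.map (fun t => -t)

/-- Max-plus matrix product. -/
def mpMulM {l m n : ℕ} (A : Fin l → Fin m → MP) (B : Fin m → Fin n → MP) :
    Fin l → Fin n → MP := fun i j => Finset.univ.sup fun k => A i k + B k j

/-- Max-plus matrix-vector product. -/
def mpMulV {m n : ℕ} (A : Fin m → Fin n → MP) (x : Fin n → MP) : Fin m → MP :=
  fun i => Finset.univ.sup fun j => A i j + x j

/-- Max-plus identity matrix. -/
def mpId {n : ℕ} : Fin n → Fin n → MP := fun i j => if i = j then ((0:ℝ) : MP) else ⊥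

/-- Max-plus matrix power. -/
def mpPow {n : ℕ} (A : Fin n → Fin n → MP) : ℕ → (Fin n → Fin n → MP)
  | 0 => mpId
  | k+1 => mpMulM (mpPow A k) A

/-- Max-plus trace. -/
def mpTr {n : ℕ} (A : Fin n → Fin n → MP) : MP := Finset.univ.sup fun i => A i i

/-- Tr(A) = tr A ⊕ tr A² ⊕ ⋯ ⊕ tr Aⁿ. -/
def mpTR {n : ℕ} (A : Fin n → Fin n → MP) : MP :=
  (Finset.Icc 1 n).sup fun m => mpTr (mpPow A m)

/-- Kleene star A* = I ⊕ A ⊕ ⋯ ⊕ A^{n-1}. -/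
def mpStar {n : ℕ} (A : Fin n → Fin n → MP) : Fin n → Fin n → MP :=
  fun i j => (Finset.range n).sup fun k => mpPow A k i j

/-- Max-plus spectral radius λ = max_{1≤m≤n} tr(A^m)^{1/m}. -/
def mpLam {n : ℕ} (A : Fin n → Fin n → MP) : MP :=
  (Finset.Icc 1 n).sup fun m => (mpTr (mpPow A m)).map (fun t => t / (m : ℝ))

/-- The alternating product B^{i₀} A B^{i₁} A ⋯ A B^{iₖ}. -/
def mpChain {n : ℕ} (A B : Fin n → Fin n → MP) : (k : ℕ) → (Fin (k+1) → ℕ) → (Fin n → Fin n → MP)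
  | 0, i => mpPow B (i 0)
  | (k+1), i => mpMulM (mpChain A B k (fun j => i j.castSucc)) (mpMulM A (mpPow B (i (Fin.last (k+1)))))

/-! Entry `(i, j)` of `A ^ k` is the largest weight of a walk of length `k` from `i` to `j`.
When `k ≥ n`, pigeonhole finds a closed subwalk of some length `1 ≤ d ≤ n`; its weight is at
most `tr (A ^ d) ≤ Tr A ≤ 0`, so cutting it out leaves a walk of length `k - d` from `i` to `j`
that is at least as heavy. Hence `A ^ k ≤ A ^ (k - d)`, and strong induction brings every
power down to one of exponent `< n`, i.e. below `A*`. -/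

def walkWeight {n : ℕ} (A : Fin n → Fin n → MP) (k : ℕ) (p : ℕ → Fin n) : MP :=
  ∑ t ∈ Finset.range k, A (p t) (p (t+1))

def cutCycle {α : Type*} (p : ℕ → α) (a d : ℕ) : ℕ → α :=
  fun t => if t ≤ a then p t else p (t + d)

theorem cutCycle_of_le {α : Type*} (p : ℕ → α) {a t : ℕ} (d : ℕ) (ht : t ≤ a) :
    cutCycle p a d t = p t :=
  if_pos ht

theorem cutCycle_add {α : Type*} {p : ℕ → α} {a d : ℕ} (hp : p (a + d) = p a) (t : ℕ) :
    cutCycle p a d (a + t) = p (a + d + t) := by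
  rcases Nat.eq_zero_or_pos t with rfl | ht
  · simp [cutCycle, hp]
  · rw [cutCycle, if_neg (by omega)]
    congr 1
    omega

theorem exists_lt_le_apply_eq {n : ℕ} (p : ℕ → Fin n) :
    ∃ a b, a < b ∧ b ≤ n ∧ p a = p b := by
  obtain ⟨x, y, hxy, hpxy⟩ :=
    Fintype.exists_ne_map_eq_of_card_lt (fun x : Fin (n + 1) => p x) (by simp)
  rcases lt_or_gt_of_ne (Fin.val_ne_of_ne hxy) with h | h
  · exact ⟨x, y, h, Nat.lt_succ_iff.mp y.isLt, hpxy⟩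
  · exact ⟨y, x, h, Nat.lt_succ_iff.mp x.isLt, hpxy.symm⟩

section Walks

variable {n : ℕ} (A : Fin n → Fin n → MP)

theorem mpPow_one : mpPow A 1 = A := by
  funext i j
  show mpMulM mpId A i j = A i j
  refine le_antisymm (Finset.sup_le fun m _ => ?_) (Finset.le_sup_of_le (Finset.mem_univ i) ?_)
  · by_cases him : i = m
    · subst him; simp [mpId]
    · simp [mpId, him]
  · simp [mpId]

theorem walkWeight_succ (k : ℕ) (p : ℕ → Fin n) :
    walkWeight A (k + 1) p = walkWeight A k p + A (p k) (p (k + 1)) :=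
  Finset.sum_range_succ _ _

theorem walkWeight_add (k l : ℕ) (p : ℕ → Fin n) :
    walkWeight A (k + l) p = walkWeight A k p + walkWeight A l (fun t => p (k + t)) := by
  simp only [walkWeight, Finset.sum_range_add, add_assoc]

theorem walkWeight_congr {k : ℕ} {p q : ℕ → Fin n} (hpq : ∀ t ≤ k, p t = q t) :
    walkWeight A k p = walkWeight A k q :=
  Finset.sum_congr rfl fun t ht => by
    have ht := Finset.mem_range.mp ht
    rw [hpq t ht.le, hpq (t + 1) ht]

theorem walkWeight_le_mpPow (k : ℕ) (p : ℕ → Fin n) :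
    walkWeight A k p ≤ mpPow A k (p 0) (p k) := by
  induction k with
  | zero => simp [walkWeight, mpPow, mpId]
  | succ k ih =>
    rw [walkWeight_succ]
    exact (add_le_add_left ih _).trans
      (Finset.le_sup (f := fun m => mpPow A k (p 0) m + A m (p (k + 1))) (Finset.mem_univ (p k)))

theorem exists_mpPow_le_walkWeight {k : ℕ} (hk : 1 ≤ k) (i j : Fin n) :
    ∃ p : ℕ → Fin n, p 0 = i ∧ p k = j ∧ mpPow A k i j ≤ walkWeight A k p := by
  induction k, hk using Nat.le_induction generalizing j with
  | base => exact ⟨fun t => if t = 0 then i else j, rfl, rfl, by simp [mpPow_one, walkWeight]⟩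
  | succ k hk ih =>
    obtain ⟨m, -, hm⟩ := Finset.exists_mem_eq_sup Finset.univ ⟨i, Finset.mem_univ i⟩
      (fun m => mpPow A k i m + A m j)
    obtain ⟨p, hp0, hpk, hle⟩ := ih m
    refine ⟨fun t => if t ≤ k then p t else j, by simp [hp0], by simp, ?_⟩
    rw [walkWeight_succ, walkWeight_congr A (q := p) fun t ht => if_pos ht, if_pos le_rfl,
      if_neg (by omega), hpk]
    exact hm.trans_le (add_le_add_left hle _)

theorem walkWeight_le_zero_of_closed (h : mpTR A ≤ ((0:ℝ) : MP)) {d : ℕ} (hd : 1 ≤ d)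
    (hdn : d ≤ n) {p : ℕ → Fin n} (hp : p d = p 0) : walkWeight A d p ≤ 0 :=
  calc walkWeight A d p ≤ mpPow A d (p 0) (p 0) := hp ▸ walkWeight_le_mpPow A d p
    _ ≤ mpTr (mpPow A d) := Finset.le_sup (f := fun i => mpPow A d i i) (Finset.mem_univ _)
    _ ≤ mpTR A :=
      Finset.le_sup (f := fun m => mpTr (mpPow A m)) (Finset.mem_Icc.mpr ⟨hd, hdn⟩)
    _ ≤ 0 := h

theorem walkWeight_le_walkWeight_cutCycle (h : mpTR A ≤ ((0:ℝ) : MP)) {a d : ℕ} (hd : 1 ≤ d)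
    (hdn : d ≤ n) {p : ℕ → Fin n} (hp : p (a + d) = p a) (c : ℕ) :
    walkWeight A (a + d + c) p ≤ walkWeight A (a + c) (cutCycle p a d) := by
  have hcycle : walkWeight A d (fun t => p (a + t)) ≤ 0 :=
    walkWeight_le_zero_of_closed A h hd hdn (by simpa using hp)
  rw [walkWeight_add, walkWeight_add, walkWeight_add,
    walkWeight_congr A fun t ht => cutCycle_of_le p d ht]
  simp only [cutCycle_add hp]
  calc _ ≤ walkWeight A a p + 0 + walkWeight A c (fun t => p (a + d + t)) := by gcongr
    _ = _ := by rw [add_zero]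

theorem exists_lt_mpPow_le (h : mpTR A ≤ ((0:ℝ) : MP)) {k : ℕ} (hk : n ≤ k) (i j : Fin n) :
    ∃ l < k, mpPow A k i j ≤ mpPow A l i j := by
  obtain ⟨p, rfl, rfl, hle⟩ := exists_mpPow_le_walkWeight A (i.pos.trans_le hk) i j
  obtain ⟨a, b, hab, hbn, hpab⟩ := exists_lt_le_apply_eq p
  obtain ⟨d, rfl⟩ : ∃ d, b = a + d := ⟨b - a, by omega⟩
  obtain ⟨c, rfl⟩ : ∃ c, k = a + d + c := ⟨k - (a + d), by omega⟩
  refine ⟨a + c, by omega, ?_⟩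
  calc mpPow A (a + d + c) (p 0) (p (a + d + c))
      ≤ walkWeight A (a + d + c) p := hle
    _ ≤ walkWeight A (a + c) (cutCycle p a d) :=
      walkWeight_le_walkWeight_cutCycle A h (by omega) (by omega) hpab.symm c
    _ ≤ mpPow A (a + c) (p 0) (p (a + d + c)) := by
      simpa only [cutCycle_of_le p d (Nat.zero_le a), cutCycle_add hpab.symm] using
        walkWeight_le_mpPow A (a + c) (cutCycle p a d)

end Walks

/-- Carré inequality: if Tr(A) ≤ 𝟙 then A^k ≤ A* for all k ≥ 0. -/
theorem maxplus_carre {n : ℕ} (A : Fin n → Fin n → MP) (h : mpTR A ≤ ((0:ℝ) : MP)) :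
    ∀ k : ℕ, ∀ i j : Fin n, mpPow A k i j ≤ mpStar A i j := by
  intro k
  induction k using Nat.strong_induction_on with
  | _ k ih =>
    intro i j
    rcases lt_or_ge k n with hk | hk
    · exact Finset.le_sup (f := fun m => mpPow A m i j) (Finset.mem_range.mpr hk)
    · obtain ⟨l, hlk, hle⟩ := exists_lt_mpPow_le A h hk i j
      exact hle.trans (ih l hlk i j)
end
end

section
/- Let A be an n×n max-plus matrix with Tr(A) ≤ 0, and let b ∈ (ℝ ∪ {-∞})^n. Then every vector of the form x = A* ⊗ u with u a regular vector satisfying u ≥ b is a regular solution of the inequality A ⊗ x ⊕ b ≤ x, and conversely every regular solution of this inequality has this form. -/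
noncomputable section

/-!
A regular solution `x` of `A ⊗ x ⊕ b ≤ x` satisfies `A ⊗ x ≤ x`, hence `Aᵏ ⊗ x ≤ x` for all `k`;
as the identity is a summand of `A*`, this gives `x = A* ⊗ x`, so `u := x` works. Conversely
`x = A* ⊗ u ≥ u ≥ b` is regular, and `A ⊗ x ≤ x` because `A ⊗ A* ≤ A*`: the only summand of
`A ⊗ A*` not already in `A*` is `Aⁿ`, and a path of length `n` repeats a vertex, so it contains
a cycle of length between `1` and `n`, of weight at most `Tr(A) ≤ 0`; deleting the cycle leaves
a shorter path that is at least as heavy.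
-/

open Finset

section WithBot

variable {ι α : Type*} [LinearOrder α] [Add α]

theorem WithBot.finset_sup_add [AddRightMono α] (s : Finset ι) (f : ι → WithBot α)
    (c : WithBot α) : s.sup f + c = s.sup fun i => f i + c :=
  apply_sup_eq_sup_comp_of_linearOrder (· + c) (fun _ _ h => add_le_add_left h c)
    (WithBot.bot_add c)

theorem WithBot.add_finset_sup [AddLeftMono α] (s : Finset ι) (f : ι → WithBot α)
    (c : WithBot α) : c + s.sup f = s.sup fun i => c + f i :=
  apply_sup_eq_sup_comp_of_linearOrder (c + ·) (fun _ _ h => add_le_add_right h c)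
    (WithBot.add_bot c)

end WithBot

section MaxPlusMatrix

variable {l m n o : ℕ}

theorem le_mpMulM (X : Fin l → Fin m → MP) (Y : Fin m → Fin n → MP) (i : Fin l) (k : Fin m)
    (j : Fin n) : X i k + Y k j ≤ mpMulM X Y i j :=
  le_sup (f := fun k => X i k + Y k j) (mem_univ k)

theorem mpMulM_assoc (X : Fin l → Fin m → MP) (Y : Fin m → Fin n → MP)
    (Z : Fin n → Fin o → MP) : mpMulM (mpMulM X Y) Z = mpMulM X (mpMulM Y Z) := by
  funext i j
  simp only [mpMulM, WithBot.finset_sup_add, WithBot.add_finset_sup, add_assoc]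
  exact Finset.sup_comm _ _ _

theorem mpMulV_mpMulM (X : Fin l → Fin m → MP) (Y : Fin m → Fin n → MP) (x : Fin n → MP) :
    mpMulV (mpMulM X Y) x = mpMulV X (mpMulV Y x) := by
  funext i
  simp only [mpMulV, mpMulM, WithBot.finset_sup_add, WithBot.add_finset_sup, add_assoc]
  exact Finset.sup_comm _ _ _

theorem mpMulV_mpId (x : Fin n → MP) : mpMulV mpId x = x := by
  funext i
  refine le_antisymm (Finset.sup_le fun j _ => ?_) ?_
  · by_cases hij : i = j <;> simp [mpId, hij]
  · simpa [mpId, mpMulV] using le_sup (f := fun j => mpId i j + x j) (mem_univ i)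

theorem mpId_mpMulM (X : Fin m → Fin n → MP) : mpMulM mpId X = X := by
  funext i j
  exact congrFun (mpMulV_mpId fun k => X k j) i

theorem mpMulM_mpId (X : Fin m → Fin n → MP) : mpMulM X mpId = X := by
  funext i j
  refine le_antisymm (Finset.sup_le fun k _ => ?_) ?_
  · by_cases hkj : k = j <;> simp [mpId, hkj]
  · simpa [mpId] using le_mpMulM X mpId i j j

theorem mpPow_add (A : Fin n → Fin n → MP) (a b : ℕ) :
    mpPow A (a + b) = mpMulM (mpPow A a) (mpPow A b) := by
  induction b with
  | zero => exact (mpMulM_mpId _).symm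
  | succ b ih => rw [← add_assoc, mpPow, ih, mpMulM_assoc, ← mpPow]

theorem mpPow_succ' (A : Fin n → Fin n → MP) (k : ℕ) :
    mpPow A (k + 1) = mpMulM A (mpPow A k) := by
  rw [add_comm, mpPow_add, mpPow, mpPow, mpId_mpMulM]

theorem mpMulV_mono_right (X : Fin m → Fin n → MP) {x y : Fin n → MP} (h : ∀ j, x j ≤ y j)
    (i : Fin m) : mpMulV X x i ≤ mpMulV X y i :=
  sup_mono_fun fun j _ => add_le_add_right (h j) _

theorem mpMulV_mono_left {X Y : Fin m → Fin n → MP} (h : ∀ i j, X i j ≤ Y i j)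
    (x : Fin n → MP) (i : Fin m) : mpMulV X x i ≤ mpMulV Y x i :=
  sup_mono_fun fun j _ => add_le_add_left (h i j) _

theorem mpMulV_finset_sup {ι : Type*} (s : Finset ι) (F : ι → Fin m → Fin n → MP)
    (x : Fin n → MP) (i : Fin m) :
    mpMulV (fun i j => s.sup fun k => F k i j) x i = s.sup fun k => mpMulV (F k) x i := by
  simp only [mpMulV, WithBot.finset_sup_add]
  exact Finset.sup_comm _ _ _

theorem mpMulM_finset_sup {ι : Type*} (X : Fin l → Fin m → MP) (s : Finset ι)
    (F : ι → Fin m → Fin n → MP) (i : Fin l) (j : Fin n) :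
    mpMulM X (fun i j => s.sup fun k => F k i j) i j = s.sup fun k => mpMulM X (F k) i j := by
  simp only [mpMulM, WithBot.add_finset_sup]
  exact Finset.sup_comm _ _ _

end MaxPlusMatrix

section Paths

variable {n : ℕ} (A : Fin n → Fin n → MP)

def pathWeight (p : ℕ → Fin n) (a l : ℕ) : MP :=
  ∑ t ∈ range l, A (p (a + t)) (p (a + t + 1))

theorem pathWeight_succ (p : ℕ → Fin n) (a l : ℕ) :
    pathWeight A p a (l + 1) = pathWeight A p a l + A (p (a + l)) (p (a + l + 1)) :=
  sum_range_succ _ _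

theorem pathWeight_add (p : ℕ → Fin n) (a l m : ℕ) :
    pathWeight A p a (l + m) = pathWeight A p a l + pathWeight A p (a + l) m := by
  simp only [pathWeight, sum_range_add, add_assoc]

theorem pathWeight_le_mpPow (p : ℕ → Fin n) (a l : ℕ) :
    pathWeight A p a l ≤ mpPow A l (p a) (p (a + l)) := by
  induction l with
  | zero => simp [pathWeight, mpPow, mpId]
  | succ l ih =>
    rw [pathWeight_succ]
    exact (add_le_add_left ih _).trans (le_mpMulM _ _ _ _ _)

theorem exists_path_of_mpPow_ne_bot (l : ℕ) (i j : Fin n) (h : mpPow A l i j ≠ ⊥) :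
    ∃ p : ℕ → Fin n, p 0 = i ∧ p l = j ∧ mpPow A l i j ≤ pathWeight A p 0 l := by
  induction l generalizing j with
  | zero =>
    have hij : i = j := by by_contra hij; simp [mpPow, mpId, hij] at h
    subst hij
    exact ⟨fun _ => i, rfl, rfl, by simp [mpPow, mpId, pathWeight]⟩
  | succ l ih =>
    obtain ⟨k, -, hk⟩ := exists_mem_eq_sup univ ⟨i, mem_univ i⟩
      fun k => mpPow A l i k + A k j
    change mpPow A (l + 1) i j = mpPow A l i k + A k j at hk
    obtain ⟨p, hp0, hpl, hp⟩ := ih k fun hbot => h (by rw [hk, hbot, WithBot.bot_add])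
    refine ⟨Function.update p (l + 1) j, by simp [hp0], by simp, ?_⟩
    have hprefix : pathWeight A (Function.update p (l + 1) j) 0 l = pathWeight A p 0 l :=
      sum_congr rfl fun t ht => by
        have := mem_range.1 ht
        rw [Function.update_of_ne (by omega), Function.update_of_ne (by omega)]
    rw [pathWeight_succ, hprefix, zero_add, Function.update_of_ne (by omega), hpl,
      Function.update_self, hk]
    exact add_le_add_left hp _

theorem pathWeight_le_mpTR (p : ℕ → Fin n) {a d : ℕ} (hd : 1 ≤ d) (hdn : d ≤ n)
    (hcycle : p (a + d) = p a) : pathWeight A p a d ≤ mpTR A :=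
  calc pathWeight A p a d ≤ mpPow A d (p a) (p a) := hcycle ▸ pathWeight_le_mpPow A p a d
    _ ≤ mpTr (mpPow A d) := le_sup (f := fun i => mpPow A d i i) (mem_univ _)
    _ ≤ mpTR A := le_sup (f := fun m => mpTr (mpPow A m)) (mem_Icc.2 ⟨hd, hdn⟩)

theorem exists_lt_le_map_eq (p : ℕ → Fin n) : ∃ s t, s < t ∧ t ≤ n ∧ p s = p t := by
  obtain ⟨a, ha, b, hb, hab, heq⟩ := exists_ne_map_eq_of_card_lt_of_maps_to
    (s := range (n + 1)) (t := (univ : Finset (Fin n))) (by simp)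
    (fun a _ => mem_coe.2 (mem_univ (p a)))
  rw [mem_range] at ha hb
  rcases hab.lt_or_gt with hlt | hlt
  · exact ⟨a, b, hlt, by omega, heq⟩
  · exact ⟨b, a, hlt, by omega, heq.symm⟩

end Paths

section KleeneStar

variable {n : ℕ} (A : Fin n → Fin n → MP)

theorem mpPow_le_mpStar {k : ℕ} (hk : k < n) (i j : Fin n) : mpPow A k i j ≤ mpStar A i j :=
  le_sup (f := fun k => mpPow A k i j) (mem_range.2 hk)

theorem mpPow_self_le_mpStar (h : mpTR A ≤ ((0:ℝ) : MP)) (i j : Fin n) :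
    mpPow A n i j ≤ mpStar A i j := by
  by_cases hbot : mpPow A n i j = ⊥
  · simp [hbot]
  obtain ⟨p, rfl, rfl, hp⟩ := exists_path_of_mpPow_ne_bot A n i j hbot
  obtain ⟨s, t, hst, htn, hrep⟩ := exists_lt_le_map_eq p
  have hcycle : pathWeight A p s (t - s) ≤ ((0:ℝ) : MP) :=
    (pathWeight_le_mpTR A p (by omega) (by omega) (by rw [Nat.add_sub_cancel' hst.le, hrep])).trans h
  have hsplit : pathWeight A p 0 n
      = pathWeight A p 0 s + pathWeight A p s (t - s) + pathWeight A p t (n - t) := by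
    calc pathWeight A p 0 n = pathWeight A p 0 (s + (t - s) + (n - t)) := by congr 1; omega
      _ = _ := by rw [pathWeight_add, pathWeight_add, zero_add, zero_add, Nat.add_sub_cancel' hst.le]
  calc mpPow A n (p 0) (p n) ≤ pathWeight A p 0 n := hp
    _ ≤ pathWeight A p 0 s + ((0:ℝ) : MP) + pathWeight A p t (n - t) := by
      rw [hsplit]; gcongr
    _ ≤ mpPow A s (p 0) (p s) + mpPow A (n - t) (p t) (p n) := by
      rw [WithBot.coe_zero, add_zero]
      gcongr
      · simpa using pathWeight_le_mpPow A p 0 s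
      · simpa [Nat.add_sub_cancel' htn] using pathWeight_le_mpPow A p t (n - t)
    _ ≤ mpPow A (s + (n - t)) (p 0) (p n) := by
      rw [mpPow_add, hrep]; exact le_mpMulM _ _ _ _ _
    _ ≤ mpStar A (p 0) (p n) := mpPow_le_mpStar A (by omega) _ _

theorem mpMulM_mpStar_le (h : mpTR A ≤ ((0:ℝ) : MP)) (i j : Fin n) :
    mpMulM A (mpStar A) i j ≤ mpStar A i j := by
  refine (mpMulM_finset_sup A (range n) (fun k => mpPow A k) i j).trans_le
    (Finset.sup_le fun k hk => ?_)
  rw [← mpPow_succ']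
  rcases (Nat.succ_le_of_lt (mem_range.1 hk)).lt_or_eq with hlt | rfl
  · exact mpPow_le_mpStar A hlt i j
  · exact mpPow_self_le_mpStar A h i j

theorem le_mpMulV_mpStar (x : Fin n → MP) (i : Fin n) : x i ≤ mpMulV (mpStar A) x i :=
  calc x i = mpMulV (mpPow A 0) x i := by rw [mpPow, mpMulV_mpId]
    _ ≤ mpMulV (mpStar A) x i := mpMulV_mono_left (mpPow_le_mpStar A i.pos) x i

theorem mpMulV_mpPow_le {x : Fin n → MP} (hx : ∀ i, mpMulV A x i ≤ x i) (k : ℕ) (i : Fin n) :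
    mpMulV (mpPow A k) x i ≤ x i := by
  induction k generalizing i with
  | zero => rw [mpPow, mpMulV_mpId]
  | succ k ih =>
    rw [mpPow, mpMulV_mpMulM]
    exact (mpMulV_mono_right _ hx i).trans (ih i)

theorem mpMulV_mpStar_le {x : Fin n → MP} (hx : ∀ i, mpMulV A x i ≤ x i) (i : Fin n) :
    mpMulV (mpStar A) x i ≤ x i :=
  (mpMulV_finset_sup (range n) (fun k => mpPow A k) x i).trans_le
    (Finset.sup_le fun k _ => mpMulV_mpPow_le A hx k i)

theorem mpMulV_mpMulV_mpStar_le (h : mpTR A ≤ ((0:ℝ) : MP)) (x : Fin n → MP) (i : Fin n) :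
    mpMulV A (mpMulV (mpStar A) x) i ≤ mpMulV (mpStar A) x i := by
  rw [← mpMulV_mpMulM]
  exact mpMulV_mono_left (mpMulM_mpStar_le A h) x i

end KleeneStar

/-- If Tr(A) ≤ 𝟙, the regular solutions of A ⊗ x ⊕ b ≤ x are exactly the
vectors x = A* ⊗ u for regular u with u ≥ b. -/
theorem maxplus_ineq_solutions {n : ℕ} (A : Fin n → Fin n → MP) (b : Fin n → MP)
    (h : mpTR A ≤ ((0:ℝ) : MP)) (x : Fin n → MP) :
    ((∀ i, x i ≠ ⊥) ∧ (∀ i, max (mpMulV A x i) (b i) ≤ x i)) ↔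
    (∃ u : Fin n → ℝ, (∀ i, b i ≤ (u i : MP)) ∧
      ∀ i, x i = mpMulV (mpStar A) (fun j => (u j : MP)) i) := by
  constructor
  · rintro ⟨hreg, hsol⟩
    have hcoe : (fun j => ((x j).unbot (hreg j) : MP)) = x := funext fun j => WithBot.coe_unbot _ _
    refine ⟨fun i => (x i).unbot (hreg i), fun i => ?_, fun i => ?_⟩
    · rw [WithBot.coe_unbot]
      exact (le_max_right _ _).trans (hsol i)
    · rw [hcoe]
      exact le_antisymm (le_mpMulV_mpStar A x i)
        (mpMulV_mpStar_le A (fun j => (le_max_left _ _).trans (hsol j)) i)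
  · rintro ⟨u, hbu, hx⟩
    obtain rfl : x = mpMulV (mpStar A) fun j => (u j : MP) := funext hx
    have hu := le_mpMulV_mpStar A fun j => (u j : MP)
    exact ⟨fun i => ne_bot_of_le_ne_bot WithBot.coe_ne_bot (hu i),
      fun i => max_le (mpMulV_mpMulV_mpStar_le A h _ i) ((hbu i).trans (hu i))⟩
end
end

section
/- Let A be an n×n max-plus matrix with Tr(A) > 0, where Tr(A) = tr A ⊕ ... ⊕ tr Aⁿ. Then for any vector b, the inequality A ⊗ x ⊕ b ≤ x has no regular solution x. -/
noncomputable section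

/-! A regular solution `x` is a subeigenvector of `A`: `A i j + x j ≤ x i` for all `i, j`.
This property is stable under max-plus products, so it passes to every power `A^m`. If
`(A^m) i i > 0`, then `x i ≥ (A^m) i i + x i > x i`, which is absurd because
`x i` is finite. -/

lemma mpMulV_le_iff {m n : ℕ} {A : Fin m → Fin n → MP} {x : Fin n → MP} {i : Fin m}
    {y : MP} :
    mpMulV A x i ≤ y ↔ ∀ j, A i j + x j ≤ y := by
  simp [mpMulV]

lemma mpMulM_add_le {l m n : ℕ} {B : Fin l → Fin m → MP} {C : Fin m → Fin n → MP}
    {x : Fin l → MP} {y : Fin m → MP} {z : Fin n → MP}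
    (hB : ∀ i k, B i k + y k ≤ x i) (hC : ∀ k j, C k j + z j ≤ y k)
    (i : Fin l) (j : Fin n) :
    mpMulM B C i j + z j ≤ x i := by
  rcases isEmpty_or_nonempty (Fin m) with _ | _
  · simp [mpMulM]
  obtain ⟨k, -, hk⟩ := Finset.exists_mem_eq_sup Finset.univ Finset.univ_nonempty
    (fun k => B i k + C k j)
  calc mpMulM B C i j + z j = B i k + (C k j + z j) := by rw [mpMulM, hk, add_assoc]
    _ ≤ B i k + y k := by gcongr; exact hC k j
    _ ≤ x i := hB i k

lemma mpPow_add_le {n : ℕ} {A : Fin n → Fin n → MP} {x : Fin n → MP}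
    (hA : ∀ i j, A i j + x j ≤ x i) (m : ℕ) (i j : Fin n) : mpPow A m i j + x j ≤ x i := by
  induction m generalizing i j with
  | zero => by_cases hij : i = j <;> simp [mpPow, mpId, hij]
  | succ k ih => exact mpMulM_add_le ih hA i j

/-- If Tr(A) > 𝟙 then A ⊗ x ⊕ b ≤ x has no regular solution. -/
theorem maxplus_ineq_no_solution {n : ℕ} (A : Fin n → Fin n → MP)
    (h : ((0:ℝ) : MP) < mpTR A) (b : Fin n → MP) :
    ¬ ∃ x : Fin n → ℝ,
        ∀ i, max (mpMulV A (fun j => (x j : MP)) i) (b i) ≤ (x i : MP) := by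
  rintro ⟨x, hx⟩
  obtain ⟨m, -, i, -, hpos⟩ :
      ∃ m ∈ Finset.Icc 1 n, ∃ i ∈ Finset.univ, ((0:ℝ) : MP) < mpPow A m i i := by
    simpa only [mpTR, mpTr, Finset.lt_sup_iff] using h
  have hA : ∀ i j, A i j + (x j : MP) ≤ x i := fun i =>
    mpMulV_le_iff.mp (le_of_max_le_left (hx i))
  have hcycle : mpPow A m i i + (x i : MP) ≤ ((0:ℝ) : MP) + x i := by
    simpa using mpPow_add_le hA m i i
  exact hpos.not_ge ((WithBot.add_le_add_iff_right WithBot.coe_ne_bot).mp hcycle)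
end
end
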